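/- arXiv:1808.10590 — 6 statements merged into one kernel-verified Lean document; each statement's English description precedes it below -/
import Mathlib

section
/- Let I be a finite index set, T^i finite sets, R a finite set, D > 0, and let λ^i ≥ 0 with ∑_i λ^i = 1. A vector f = (f_r(t)) satisfies: the separability condition f_r(t^i,t^{-i}) − f_r(t̃^i,t^{-i}) = f_r(t^i,t̃^{-i}) − f_r(t̃^i,t̃^{-i}) for all r, i, types; ∑_r f_r(t) = D for all t; f_r(t) ≥ 0; and D − ∑_r min_{t^i} f_r(t^i, t^{-i}) ≤ λ^i D for all t^{-i} and all i — if and only if there exist functions q^i : T^i → ℝ^R with q_r^i(t^i) ≥ 0, ∑_r q_r^i(t^i) = λ^i D for all t^i, and f_r(t) = ∑_{i∈I} q_r^i(t^i) for all r, t. -/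
/-!
Separability makes every `f r` additive across populations around a reference profile `t₀`:
`f r t = f r t₀ + ∑ i, (f r (update t₀ i (t i)) - f r t₀)`. Hence `f` is induced by
`q i a r = f r (update t₀ i a) - f r t₀ + χ i r` as soon as `χ` splits the reference flow
(`∑ i, χ i r = f r t₀`, `∑ r, χ i r = lam i * D`) and `χ i r` dominates the largest drop
`d i r = f r t₀ - min_a f r (update t₀ i a)`. Nonnegativity of `f` at the minimizers and the
information impact constraint say that the slacks `f r t₀ - ∑ i, d i r` and `lam i * D - ∑ r, d i r`
are nonnegative; both have total `D - ∑ i, ∑ r, d i r`, so a product transport plan distributes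
them. Conversely, for `f` induced by `q`, the minimum over `t i` is at least the flow
`∑ j ≠ i, q j (t j) r` of the other populations, which totals `D - lam i * D`.
-/

open Finset Function

theorem exists_nonneg_matrix_sum_eq {ι κ 𝕜 : Type*} [Fintype ι] [Fintype κ] [Field 𝕜]
    [LinearOrder 𝕜] [IsStrictOrderedRing 𝕜] {s : ι → 𝕜} {c : κ → 𝕜}
    (hs : ∀ i, 0 ≤ s i) (hc : ∀ k, 0 ≤ c k) (h : ∑ i, s i = ∑ k, c k) :
    ∃ x : ι → κ → 𝕜, (∀ i k, 0 ≤ x i k) ∧ (∀ i, ∑ k, x i k = s i) ∧ (∀ k, ∑ i, x i k = c k) := by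
  rcases eq_or_ne (∑ i, s i) 0 with hS | hS
  · have hs0 := (sum_eq_zero_iff_of_nonneg fun i _ => hs i).mp hS
    have hc0 := (sum_eq_zero_iff_of_nonneg fun k _ => hc k).mp (h ▸ hS)
    exact ⟨0, fun _ _ => le_rfl, fun i => by simp [hs0 i], fun k => by simp [hc0 k]⟩
  · refine ⟨fun i k => s i * c k / ∑ i, s i, fun i k =>
      div_nonneg (mul_nonneg (hs i) (hc k)) (sum_nonneg fun i _ => hs i), fun i => ?_, fun k => ?_⟩
    · rw [← sum_div, ← mul_sum, ← h, mul_div_cancel_right₀ _ hS]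
    · rw [← sum_div, ← sum_mul, mul_div_cancel_left₀ _ hS]

section

variable {I : Type*} [DecidableEq I] {T : I → Type*} {M : Type*} [AddCommGroup M]

def HasSeparableIncrements (g : (∀ i, T i) → M) : Prop :=
  ∀ (i : I) (a b : T i) (t t' : ∀ j, T j),
    g (update t i a) - g (update t i b) = g (update t' i a) - g (update t' i b)

def coordMin {α : Type*} [LinearOrder α] [∀ i, Fintype (T i)] [∀ i, Nonempty (T i)]
    (g : (∀ i, T i) → α) (i : I) (t : ∀ j, T j) : α :=
  univ.inf' univ_nonempty fun a : T i => g (update t i a)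

theorem coordMin_le {α : Type*} [LinearOrder α] [∀ i, Fintype (T i)] [∀ i, Nonempty (T i)]
    (g : (∀ i, T i) → α) (i : I) (t : ∀ j, T j) (a : T i) : coordMin g i t ≤ g (update t i a) :=
  inf'_le _ (mem_univ a)

variable [Fintype I]

theorem HasSeparableIncrements.eq_add_sum {g : (∀ i, T i) → M} (hg : HasSeparableIncrements g)
    (t₀ t : ∀ i, T i) : g t = g t₀ + ∑ i, (g (update t₀ i (t i)) - g t₀) := by
  suffices h : ∀ s : Finset I,
      g (s.piecewise t t₀) = g t₀ + ∑ i ∈ s, (g (update t₀ i (t i)) - g t₀) by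
    simpa using h univ
  intro s
  induction s using Finset.induction_on with
  | empty => simp
  | @insert j s hj ih =>
    have hstep := hg j (t j) (t₀ j) (s.piecewise t t₀) t₀
    rw [update_eq_self_iff.mpr (s.piecewise_eq_of_notMem _ _ hj).symm, update_eq_self] at hstep
    rw [piecewise_insert, sum_insert hj, add_left_comm, ← ih, ← hstep, sub_add_cancel]

theorem sum_update_eq_add_sum_erase (φ : ∀ i, T i → M) (t : ∀ i, T i) (i : I) (a : T i) :
    ∑ j, φ j (update t i a j) = φ i a + ∑ j ∈ univ.erase i, φ j (t j) := by
  rw [← add_sum_erase univ _ (mem_univ i), update_self]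
  congr 1
  exact sum_congr rfl fun j hj => by rw [update_of_ne (ne_of_mem_erase hj)]

theorem hasSeparableIncrements_sum (φ : ∀ i, T i → M) :
    HasSeparableIncrements fun t : ∀ i, T i => ∑ i, φ i (t i) := by
  intro i a b t t'
  simp only [sum_update_eq_add_sum_erase, add_sub_add_right_eq_sub]

variable {R : Type*} [Fintype R] {D : ℝ} {lam : I → ℝ} {f : R → (∀ i, T i) → ℝ}

theorem exists_strategy_of_reference_split (hsep : ∀ r, HasSeparableIncrements (f r))
    (hdem : ∀ t, ∑ r, f r t = D) {t₀ : ∀ i, T i} {χ : I → R → ℝ}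
    (hrow : ∀ i, ∑ r, χ i r = lam i * D) (hcol : ∀ r, ∑ i, χ i r = f r t₀)
    (hχ : ∀ i r a, f r t₀ - f r (update t₀ i a) ≤ χ i r) :
    ∃ q : ∀ i : I, T i → R → ℝ, (∀ i a r, 0 ≤ q i a r) ∧ (∀ i a, ∑ r, q i a r = lam i * D) ∧
      ∀ r t, f r t = ∑ i, q i (t i) r := by
  refine ⟨fun i a r => f r (update t₀ i a) - f r t₀ + χ i r, fun i a r => ?_, fun i a => ?_,
    fun r t => ?_⟩
  · linarith [hχ i r a]
  · simp only [sum_add_distrib, sum_sub_distrib, hdem, hrow, sub_self, zero_add]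
  · rw [sum_add_distrib, hcol, add_comm, ← (hsep r).eq_add_sum]

variable [∀ i, Fintype (T i)] [∀ i, Nonempty (T i)]

theorem HasSeparableIncrements.sum_sub_coordMin_le {N : Type*} [AddCommGroup N] [LinearOrder N]
    [IsOrderedAddMonoid N] {g : (∀ i, T i) → N} (hg : HasSeparableIncrements g)
    (hg0 : ∀ t, 0 ≤ g t) (t₀ : ∀ i, T i) : ∑ i, (g t₀ - coordMin g i t₀) ≤ g t₀ := by
  have hmin : ∀ i, ∃ a, coordMin g i t₀ = g (update t₀ i a) := fun i =>
    let ⟨a, _, ha⟩ := exists_mem_eq_inf' univ_nonempty fun a : T i => g (update t₀ i a)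
    ⟨a, ha⟩
  choose tmin htmin using hmin
  calc ∑ i, (g t₀ - coordMin g i t₀) = g t₀ - g tmin := by
        rw [hg.eq_add_sum t₀ tmin]
        simp only [htmin, sum_sub_distrib]
        abel
    _ ≤ g t₀ := sub_le_self _ (hg0 tmin)

theorem exists_reference_split (hsep : ∀ r, HasSeparableIncrements (f r))
    (hdem : ∀ t, ∑ r, f r t = D) (hnn : ∀ r t, 0 ≤ f r t) (hlam1 : ∑ i, lam i = 1)
    {t₀ : ∀ i, T i} (hiic : ∀ i, D - ∑ r, coordMin (f r) i t₀ ≤ lam i * D) :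
    ∃ χ : I → R → ℝ, (∀ i, ∑ r, χ i r = lam i * D) ∧ (∀ r, ∑ i, χ i r = f r t₀) ∧
      ∀ i r a, f r t₀ - f r (update t₀ i a) ≤ χ i r := by
  set d : I → R → ℝ := fun i r => f r t₀ - coordMin (f r) i t₀
  have hd : ∀ i, ∑ r, d i r = D - ∑ r, coordMin (f r) i t₀ := fun i => by
    rw [sum_sub_distrib, hdem]
  obtain ⟨x, hx0, hxrow, hxcol⟩ := exists_nonneg_matrix_sum_eq
    (s := fun i => lam i * D - ∑ r, d i r) (c := fun r => f r t₀ - ∑ i, d i r)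
    (fun i => by simp only [hd]; linarith [hiic i])
    (fun r => sub_nonneg.mpr ((hsep r).sum_sub_coordMin_le (hnn r) t₀))
    (by rw [sum_sub_distrib, sum_sub_distrib, ← sum_mul, hlam1, one_mul, hdem, sum_comm])
  refine ⟨d + x, fun i => ?_, fun r => ?_, fun i r a => ?_⟩
  · simp only [Pi.add_apply, sum_add_distrib, hxrow, add_sub_cancel]
  · simp only [Pi.add_apply, sum_add_distrib, hxcol, add_sub_cancel]
  · linarith [coordMin_le (f r) i t₀ a, hx0 i r, show (d + x) i r = d i r + x i r from rfl]

theorem sub_sum_coordMin_le_of_eq_sum {q : ∀ i, T i → R → ℝ} (hq0 : ∀ i a r, 0 ≤ q i a r)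
    (hqsum : ∀ i a, ∑ r, q i a r = lam i * D) (hlam1 : ∑ i, lam i = 1)
    (hf : ∀ r t, f r t = ∑ i, q i (t i) r) (i : I) (t : ∀ j, T j) :
    D - ∑ r, coordMin (f r) i t ≤ lam i * D := by
  have hbound : ∀ r, ∑ j ∈ univ.erase i, q j (t j) r ≤ coordMin (f r) i t := fun r =>
    le_inf' _ _ fun a _ => by
      rw [hf, sum_update_eq_add_sum_erase fun j b => q j b r]
      exact le_add_of_nonneg_left (hq0 i a r)
  have hothers : ∑ r, ∑ j ∈ univ.erase i, q j (t j) r = D - lam i * D := by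
    rw [sum_comm, sum_congr rfl fun j _ => hqsum j (t j), eq_sub_iff_add_eq',
      add_sum_erase univ (fun j => lam j * D) (mem_univ i), ← sum_mul, hlam1, one_mul]
  linarith [sum_le_sum fun r (_ : r ∈ univ) => hbound r]

end

theorem feasible_route_flow_polytope_general
    {I : Type*} [Fintype I] [DecidableEq I]
    {T : I → Type*} [∀ i, Fintype (T i)] [∀ i, Nonempty (T i)]
    {R : Type*} [Fintype R]
    (D : ℝ)
    (lam : I → ℝ) (hlam1 : ∑ i : I, lam i = 1)
    (f : R → (∀ i, T i) → ℝ) :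
    ((∀ (r : R) (i : I) (a b : T i) (t t' : ∀ j, T j),
        f r (Function.update t i a) - f r (Function.update t i b) =
          f r (Function.update t' i a) - f r (Function.update t' i b)) ∧
     (∀ t : ∀ i, T i, ∑ r : R, f r t = D) ∧
     (∀ (r : R) (t : ∀ i, T i), 0 ≤ f r t) ∧
     (∀ (i : I) (t : ∀ j, T j),
        D - ∑ r : R, Finset.univ.inf' Finset.univ_nonempty
            (fun a : T i => f r (Function.update t i a)) ≤ lam i * D))
    ↔
    (∃ q : ∀ i : I, T i → R → ℝ,
      (∀ (i : I) (ti : T i) (r : R), 0 ≤ q i ti r) ∧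
      (∀ (i : I) (ti : T i), ∑ r : R, q i ti r = lam i * D) ∧
      (∀ (r : R) (t : ∀ i, T i), f r t = ∑ i : I, q i (t i) r)) := by
  constructor
  · rintro ⟨hsep, hdem, hnn, hiic⟩
    obtain ⟨t₀⟩ : Nonempty (∀ i, T i) := inferInstance
    obtain ⟨χ, hrow, hcol, hχ⟩ := exists_reference_split hsep hdem hnn hlam1 (hiic · t₀)
    exact exists_strategy_of_reference_split hsep hdem hrow hcol hχ
  · rintro ⟨q, hq0, hqsum, hqf⟩
    have hf : f = fun r t => ∑ i, q i (t i) r := funext₂ hqf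
    refine ⟨fun r => hf ▸ hasSeparableIncrements_sum (q · · r), fun t => ?_,
      fun r t => hf ▸ sum_nonneg fun i _ => hq0 i (t i) r,
      sub_sum_coordMin_le_of_eq_sum hq0 hqsum hlam1 hqf⟩
    rw [hf, sum_comm, sum_congr rfl fun i _ => hqsum i (t i), ← sum_mul, hlam1, one_mul]

/-- Proposition 1: A route-flow vector `f` satisfies the balance, demand,
nonnegativity and information-impact constraints if and only if it is induced by a feasible
strategy profile `q = (q^i)_{i∈I}` with `q^i(t^i) ≥ 0`, `∑_r q_r^i(t^i) = λ^i D`, and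
`f_r(t) = ∑_i q_r^i(t^i)`. -/
theorem feasible_route_flow_polytope
    {I : Type*} [Fintype I] [DecidableEq I]
    {T : I → Type*} [∀ i, Fintype (T i)] [∀ i, Nonempty (T i)]
    {R : Type*} [Fintype R] [Nonempty R]
    (D : ℝ) (hD : 0 < D)
    (lam : I → ℝ) (hlam0 : ∀ i, 0 ≤ lam i) (hlam1 : ∑ i : I, lam i = 1)
    (f : R → (∀ i, T i) → ℝ) :
    ((∀ (r : R) (i : I) (a b : T i) (t t' : ∀ j, T j),
        f r (Function.update t i a) - f r (Function.update t i b) =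
          f r (Function.update t' i a) - f r (Function.update t' i b)) ∧
     (∀ t : ∀ i, T i, ∑ r : R, f r t = D) ∧
     (∀ (r : R) (t : ∀ i, T i), 0 ≤ f r t) ∧
     (∀ (i : I) (t : ∀ j, T j),
        D - ∑ r : R, Finset.univ.inf' Finset.univ_nonempty
            (fun a : T i => f r (Function.update t i a)) ≤ lam i * D))
    ↔
    (∃ q : ∀ i : I, T i → R → ℝ,
      (∀ (i : I) (ti : T i) (r : R), 0 ≤ q i ti r) ∧
      (∀ (i : I) (ti : T i), ∑ r : R, q i ti r = lam i * D) ∧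
      (∀ (r : R) (t : ∀ i, T i), f r t = ∑ i : I, q i (t i) r)) :=
  feasible_route_flow_polytope_general D lam hlam1 f
end

section
/- In the two-route two-state game of the motivating example with λ¹ ∈ [λ̲¹, 1], define the equilibrium family q₁^{1*}(a) = χ, q₁^{1*}(n) = λ̲¹ + χ, q₁^{2*} = α₂/(α₁^a + α₂) − χ, for χ ∈ [ max{0, λ¹ − α₁^a/(α₁^a+α₂)}, min{ α₂/(α₁^a+α₂), λ¹ − λ̲¹ } ]. Then for every such χ: (i) all strategy components are nonnegative and feasible (q₁^{1*}(t) ≤ λ¹, q₁^{2*} ≤ 1 − λ¹); (ii) the induced flow on route r₁ is ℓ₁* = α₂/(α₁^a+α₂) when the state is a and ℓ₁* = α₂/(α₁^n+α₂) when the state is n, independent of χ and of λ¹; (iii) in each state s the route costs are equalized: α₁^s ℓ₁* + b = α₂ (1 − ℓ₁*) + b. -/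
/-! In state `s` the Wardrop split of a unit demand is `ℓ = α₂ / (α₁ˢ + α₂)`, the unique solution of
`α₁ˢ ℓ = α₂ (1 - ℓ)`. The profile only distributes this flow between the two populations: the `χ`
terms cancel, and `λ̲¹` is by definition the gap between the state-`n` and state-`a` splits, so it is
nonnegative because `α₁ⁿ < α₁ᵃ`. Feasibility is then linear bookkeeping on the `χ`-interval. -/

lemma one_sub_div_add_eq_div {K : Type*} [Field K] {a c : K} (h : a + c ≠ 0) :
    1 - c / (a + c) = a / (a + c) := by
  rw [one_sub_div h, add_sub_cancel_right]

lemma mul_div_add_eq_mul_one_sub_div {K : Type*} [Field K] {a c : K} (h : a + c ≠ 0) :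
    a * (c / (a + c)) = c * (1 - c / (a + c)) := by
  rw [one_sub_div_add_eq_div h, mul_div_assoc', mul_div_assoc', mul_comm]

lemma mul_one_div_sub_one_div_nonneg {K : Type*} [Field K] [LinearOrder K] [IsStrictOrderedRing K]
    {a a' c : K} (hc : 0 ≤ c) (ha : 0 < a + c) (haa' : a ≤ a') :
    0 ≤ c * (1 / (a + c) - 1 / (a' + c)) :=
  mul_nonneg hc (sub_nonneg.2 (one_div_le_one_div_of_le ha (add_le_add_left haa' c)))

theorem second_regime_equilibrium_general
    (α1a α1n α2 b lam1 χ : ℝ)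
    (h0 : 0 < α1n) (h1 : α1n < α2) (h2 : α2 < α1a)
    (lamL : ℝ) (hlamL : lamL = α2 * (1 / (α1n + α2) - 1 / (α1a + α2)))
    (hχlo : max 0 (lam1 - α1a / (α1a + α2)) ≤ χ)
    (hχhi : χ ≤ min (α2 / (α1a + α2)) (lam1 - lamL)) :
    -- (i) feasibility
    (0 ≤ χ ∧ χ ≤ lam1 ∧ 0 ≤ lamL + χ ∧ lamL + χ ≤ lam1 ∧
      0 ≤ α2 / (α1a + α2) - χ ∧ α2 / (α1a + α2) - χ ≤ 1 - lam1) ∧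
    -- (ii) induced flows on route 1 are independent of χ and lam1
    (χ + (α2 / (α1a + α2) - χ) = α2 / (α1a + α2) ∧
      (lamL + χ) + (α2 / (α1a + α2) - χ) = α2 / (α1n + α2)) ∧
    -- (iii) route costs are equalized in each state
    (α1a * (α2 / (α1a + α2)) + b = α2 * (1 - α2 / (α1a + α2)) + b ∧
      α1n * (α2 / (α1n + α2)) + b = α2 * (1 - α2 / (α1n + α2)) + b) := by
  have hn : 0 < α1n + α2 := by linarith
  have ha : α1a + α2 ≠ 0 := by linarith
  have hlamL0 : 0 ≤ lamL := hlamL ▸ mul_one_div_sub_one_div_nonneg (by linarith) hn (by linarith)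
  obtain ⟨hχ0, hχa⟩ := max_le_iff.1 hχlo
  obtain ⟨hχ1, hχ2⟩ := le_min_iff.1 hχhi
  have hsplit := one_sub_div_add_eq_div ha
  refine ⟨⟨hχ0, by linarith, by linarith, by linarith, by linarith, by linarith⟩,
    ⟨by ring, by rw [hlamL]; ring⟩, ?_, ?_⟩
  · rw [mul_div_add_eq_mul_one_sub_div ha]
  · rw [mul_div_add_eq_mul_one_sub_div hn.ne']

/-- Second-regime equilibrium family of the motivating example. For
`λ¹ ∈ [λ̲¹, 1]` and any `χ` in the admissible interval, the strategy profile
`q₁^{1*}(a)=χ`, `q₁^{1*}(n)=λ̲¹+χ`, `q₁^{2*}=α₂/(α₁ᵃ+α₂)−χ` is feasible, induces the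
χ- and λ¹-independent route-1 flows `α₂/(α₁ᵃ+α₂)` (state a) and `α₂/(α₁ⁿ+α₂)` (state n),
and equalizes the two route costs in each state. -/
theorem second_regime_equilibrium
    (α1a α1n α2 b lam1 χ : ℝ)
    (hb : 0 < b)
    (h0 : 0 < α1n) (h1 : α1n < α2) (h2 : α2 < α1a)
    (lamL : ℝ) (hlamL : lamL = α2 * (1 / (α1n + α2) - 1 / (α1a + α2)))
    (hlam1 : lamL ≤ lam1) (hlam1' : lam1 ≤ 1)
    (hχlo : max 0 (lam1 - α1a / (α1a + α2)) ≤ χ)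
    (hχhi : χ ≤ min (α2 / (α1a + α2)) (lam1 - lamL)) :
    -- (i) feasibility
    (0 ≤ χ ∧ χ ≤ lam1 ∧ 0 ≤ lamL + χ ∧ lamL + χ ≤ lam1 ∧
      0 ≤ α2 / (α1a + α2) - χ ∧ α2 / (α1a + α2) - χ ≤ 1 - lam1) ∧
    -- (ii) induced flows on route 1 are independent of χ and lam1
    (χ + (α2 / (α1a + α2) - χ) = α2 / (α1a + α2) ∧
      (lamL + χ) + (α2 / (α1a + α2) - χ) = α2 / (α1n + α2)) ∧
    -- (iii) route costs are equalized in each state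
    (α1a * (α2 / (α1a + α2)) + b = α2 * (1 - α2 / (α1a + α2)) + b ∧
      α1n * (α2 / (α1n + α2)) + b = α2 * (1 - α2 / (α1n + α2)) + b) :=
  second_regime_equilibrium_general α1a α1n α2 b lam1 χ h0 h1 h2 lamL hlamL hχlo hχhi
end

section
/- In the two-route two-state game of the motivating example with λ¹ ∈ [0, λ̲¹), the strategy profile q₁^{1*}(a) = 0, q₁^{1*}(n) = λ¹, q₁^{2*} = α₂/(ᾱ₁ + α₂) − λ¹ (1−p)(α₁^n + α₂)/(ᾱ₁ + α₂), where ᾱ₁ = p α₁^a + (1−p) α₁^n, satisfies the Bayesian Wardrop equilibrium conditions: (i) for the informed population in state a, c₁^a(q₁^{2*}) ≥ c₂(1 − q₁^{2*}); (ii) for the informed population in state n, c₁^n(λ¹ + q₁^{2*}) ≤ c₂(1 − λ¹ − q₁^{2*}); (iii) for the uninformed population, the expected costs of the two routes under the prior are equal: p·c₁^a(q₁^{2*}) + (1−p)·c₁^n(λ¹ + q₁^{2*}) = p·c₂(1 − q₁^{2*}) + (1−p)·c₂(1 − λ¹ − q₁^{2*}); and moreover 0 < q₁^{2*} ≤ 1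 − λ¹. -/
/-!
Condition (iii) is linear in `q₁^{2*}` and the stated value is its solution. Once the indifference
equation is used, the slacks in (i) and (ii), multiplied by `ᾱ₁ + α₂ > 0`, are `1 - p` and `p` times
`α₂ (α₁^a - α₁^n) - λ¹ (α₁^n + α₂)(α₁^a + α₂)`, and this quantity is positive exactly when `λ¹ < λ̲¹`.
Feasibility then follows from (i) and (ii).
-/

section FirstRegime

variable {p α1a α1n α2 lam q : ℝ}

lemma lt_threshold_iff (hn : 0 < α1n + α2) (ha : 0 < α1a + α2) :
    lam < α2 * (1 / (α1n + α2) - 1 / (α1a + α2)) ↔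
      lam * ((α1n + α2) * (α1a + α2)) < α2 * (α1a - α1n) := by
  have hthreshold : α2 * (1 / (α1n + α2) - 1 / (α1a + α2)) * ((α1n + α2) * (α1a + α2)) =
      α2 * (α1a - α1n) := by
    field_simp
    ring
  rw [← hthreshold, mul_lt_mul_iff_of_pos_right (mul_pos hn ha)]

lemma expected_cost_eq_iff (b : ℝ) :
    p * (α1a * q + b) + (1 - p) * (α1n * (lam + q) + b) =
        p * (α2 * (1 - q) + b) + (1 - p) * (α2 * (1 - lam - q) + b) ↔
      (p * α1a + (1 - p) * α1n + α2) * q = α2 - lam * ((1 - p) * (α1n + α2)) := by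
  constructor <;> intro h <;> linear_combination h

section Slack

variable (hq : (p * α1a + (1 - p) * α1n + α2) * q = α2 - lam * ((1 - p) * (α1n + α2)))
include hq

lemma mul_slack_state_a_eq :
    (p * α1a + (1 - p) * α1n + α2) * ((α1a + α2) * q - α2) =
      (1 - p) * (α2 * (α1a - α1n) - lam * ((α1n + α2) * (α1a + α2))) := by
  linear_combination (α1a + α2) * hq

lemma mul_slack_state_n_eq :
    (p * α1a + (1 - p) * α1n + α2) * (α2 - (α1n + α2) * (lam + q)) =
      p * (α2 * (α1a - α1n) - lam * ((α1n + α2) * (α1a + α2))) := by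
  linear_combination -(α1n + α2) * hq

variable (hS : 0 < p * α1a + (1 - p) * α1n + α2)
  (hgap : lam * ((α1n + α2) * (α1a + α2)) < α2 * (α1a - α1n))
include hS hgap

lemma lt_mul_of_indifferent (hp1 : p < 1) : α2 < (α1a + α2) * q := by
  have hslack := mul_slack_state_a_eq hq
  refine sub_pos.mp (pos_of_mul_pos_right ?_ hS.le)
  rw [hslack]
  exact mul_pos (sub_pos.mpr hp1) (sub_pos.mpr hgap)

lemma mul_lt_of_indifferent (hp : 0 < p) : (α1n + α2) * (lam + q) < α2 := by
  have hslack := mul_slack_state_n_eq hq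
  refine sub_pos.mp (pos_of_mul_pos_right ?_ hS.le)
  rw [hslack]
  exact mul_pos hp (sub_pos.mpr hgap)

end Slack

end FirstRegime

theorem first_regime_equilibrium_general
    (p α1a α1n α2 b lam1 : ℝ)
    (hp : 0 < p) (hp1 : p < 1)
    (h0 : 0 < α1n) (h1 : α1n < α2) (h2 : α2 < α1a)
    (lamL : ℝ) (hlamL : lamL = α2 * (1 / (α1n + α2) - 1 / (α1a + α2)))
    (hlam1' : lam1 < lamL)
    (abar q2 : ℝ)
    (habar : abar = p * α1a + (1 - p) * α1n)
    (hq2 : q2 = α2 / (abar + α2) - lam1 * ((1 - p) * (α1n + α2)) / (abar + α2)) :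
    -- (i) informed population prefers r₂ in state a
    (α2 * (1 - q2) + b ≤ α1a * q2 + b) ∧
    -- (ii) informed population prefers r₁ in state n
    (α1n * (lam1 + q2) + b ≤ α2 * (1 - lam1 - q2) + b) ∧
    -- (iii) uninformed population is indifferent in expectation
    (p * (α1a * q2 + b) + (1 - p) * (α1n * (lam1 + q2) + b) =
      p * (α2 * (1 - q2) + b) + (1 - p) * (α2 * (1 - lam1 - q2) + b)) ∧
    -- feasibility of q₁^{2*}
    (0 < q2 ∧ q2 ≤ 1 - lam1) := by
  subst habar lamL
  have hn : 0 < α1n + α2 := by linarith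
  have ha : 0 < α1a + α2 := by linarith
  have hS : 0 < p * α1a + (1 - p) * α1n + α2 := by nlinarith
  have hgap := (lt_threshold_iff hn ha).mp hlam1'
  have hq : (p * α1a + (1 - p) * α1n + α2) * q2 = α2 - lam1 * ((1 - p) * (α1n + α2)) := by
    rw [hq2]
    field_simp
  have hi := lt_mul_of_indifferent hq hS hgap hp1
  have hii := mul_lt_of_indifferent hq hS hgap hp
  have hq2_pos : 0 < q2 := pos_of_mul_pos_right (by linarith) ha.le
  have hsum_lt_one : lam1 + q2 < 1 :=
    lt_of_mul_lt_mul_left (by linarith : (α1n + α2) * (lam1 + q2) < (α1n + α2) * 1) hn.le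
  exact ⟨by linarith, by linarith, (expected_cost_eq_iff b).mpr hq, hq2_pos, by linarith⟩

/-- First-regime equilibrium verification in the motivating example. For
`λ¹ ∈ [0, λ̲¹)`, the profile `q₁^{1*}(a)=0`, `q₁^{1*}(n)=λ¹`,
`q₁^{2*} = α₂/(ᾱ₁+α₂) − λ¹(1−p)(α₁ⁿ+α₂)/(ᾱ₁+α₂)` satisfies the Bayesian Wardrop
conditions (i)-(iii) and `0 < q₁^{2*} ≤ 1 − λ¹`. -/
theorem first_regime_equilibrium
    (p α1a α1n α2 b lam1 : ℝ)
    (hp : 0 < p) (hp1 : p < 1) (hb : 0 < b)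
    (h0 : 0 < α1n) (h1 : α1n < α2) (h2 : α2 < α1a)
    (lamL : ℝ) (hlamL : lamL = α2 * (1 / (α1n + α2) - 1 / (α1a + α2)))
    (hlam1 : 0 ≤ lam1) (hlam1' : lam1 < lamL)
    (abar q2 : ℝ)
    (habar : abar = p * α1a + (1 - p) * α1n)
    (hq2 : q2 = α2 / (abar + α2) - lam1 * ((1 - p) * (α1n + α2)) / (abar + α2)) :
    -- (i) informed population prefers r₂ in state a
    (α2 * (1 - q2) + b ≤ α1a * q2 + b) ∧
    -- (ii) informed population prefers r₁ in state n
    (α1n * (lam1 + q2) + b ≤ α2 * (1 - lam1 - q2) + b) ∧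
    -- (iii) uninformed population is indifferent in expectation
    (p * (α1a * q2 + b) + (1 - p) * (α1n * (lam1 + q2) + b) =
      p * (α2 * (1 - q2) + b) + (1 - p) * (α2 * (1 - lam1 - q2) + b)) ∧
    -- feasibility of q₁^{2*}
    (0 < q2 ∧ q2 ≤ 1 - lam1) :=
  first_regime_equilibrium_general p α1a α1n α2 b lam1 hp hp1 h0 h1 h2 lamL hlamL hlam1' abar q2
    habar hq2
end

section
/- In the two-route two-state motivating example with λ¹ ∈ [0, λ̲¹) and equilibrium as above, the relative value of information is strictly positive: the uninformed population's expected equilibrium cost strictly exceeds the informed population's, i.e., C²*(λ) − C¹*(λ) > 0, where C¹*(λ) = p·c₂(1 − q₁^{2*}) + (1−p)·c₁^n(λ¹ + q₁^{2*}) and C²*(λ) = p·c₁^a(q₁^{2*}) + (1−p)·c₁^n(λ¹ + q₁^{2*}) (equivalently the common expected route cost of population 2). -/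
/-!
The populations differ only in state `a`, where the informed one pays `c₂(1 - q)` on `r₂` and
the uninformed one pays `c₁ᵃ(q)` on `r₁`; hence `C² - C¹ = p ((α₁ᵃ + α₂) q - α₂)`, and the claim
is that the uninformed share `q` of `r₁` exceeds the share `α₂ / (α₁ᵃ + α₂)` equalising both
costs in state `a`. After clearing the denominator of `q`, that inequality is `1 - p` times the
regime condition `λ¹ < λ̲¹` with its denominators cleared.
-/

noncomputable def lowerThreshold (α1n α1a α2 : ℝ) : ℝ := α2 * (1 / (α1n + α2) - 1 / (α1a + α2))

theorem lt_lowerThreshold_iff {α1n α1a α2 lam : ℝ} (hn : 0 < α1n + α2) (ha : 0 < α1a + α2) :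
    lam < lowerThreshold α1n α1a α2 ↔ lam * ((α1n + α2) * (α1a + α2)) < α2 * (α1a - α1n) := by
  have hthreshold : lowerThreshold α1n α1a α2 = α2 * (α1a - α1n) / ((α1n + α2) * (α1a + α2)) := by
    rw [lowerThreshold]
    field_simp
    ring
  rw [hthreshold, lt_div_iff₀ (mul_pos hn ha)]

theorem lt_mul_share_of_lt_lowerThreshold {p α1a α1n α2 lam q : ℝ} (hp1 : p < 1)
    (hn : 0 < α1n + α2) (ha : 0 < α1a + α2) (hD : 0 < p * α1a + (1 - p) * α1n + α2)
    (hq : q * (p * α1a + (1 - p) * α1n + α2) = α2 - lam * ((1 - p) * (α1n + α2)))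
    (hlam : lam < lowerThreshold α1n α1a α2) :
    α2 < (α1a + α2) * q := by
  rw [lt_lowerThreshold_iff hn ha] at hlam
  rw [← mul_lt_mul_iff_of_pos_right hD]
  calc α2 * (p * α1a + (1 - p) * α1n + α2)
      < (α1a + α2) * (α2 - lam * ((1 - p) * (α1n + α2))) := by
        linear_combination mul_lt_mul_of_pos_left hlam (sub_pos.2 hp1)
    _ = (α1a + α2) * q * (p * α1a + (1 - p) * α1n + α2) := by rw [mul_assoc, hq]

theorem relative_value_positive_first_regime_general
    (p α1a α1n α2 b lam1 : ℝ)
    (hp : 0 < p) (hp1 : p < 1)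
    (h0 : 0 < α1n) (h1 : α1n < α2) (h2 : α2 < α1a)
    (lamL : ℝ) (hlamL : lamL = α2 * (1 / (α1n + α2) - 1 / (α1a + α2)))
    (hlam1' : lam1 < lamL)
    (abar q2 C1 C2 : ℝ)
    (habar : abar = p * α1a + (1 - p) * α1n)
    (hq2 : q2 = α2 / (abar + α2) - lam1 * ((1 - p) * (α1n + α2)) / (abar + α2))
    (hC1 : C1 = p * (α2 * (1 - q2) + b) + (1 - p) * (α1n * (lam1 + q2) + b))
    (hC2 : C2 = p * (α1a * q2 + b) + (1 - p) * (α1n * (lam1 + q2) + b)) :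
    0 < C2 - C1 := by
  subst habar hlamL
  have hn : 0 < α1n + α2 := by linarith
  have ha : 0 < α1a + α2 := by linarith
  have hD : 0 < p * α1a + (1 - p) * α1n + α2 := by
    nlinarith [mul_pos hp (h0.trans (h1.trans h2)), mul_pos (sub_pos.2 hp1) h0]
  have hq : q2 * (p * α1a + (1 - p) * α1n + α2) = α2 - lam1 * ((1 - p) * (α1n + α2)) := by
    rw [hq2]
    field_simp
  have hshare : α2 < (α1a + α2) * q2 :=
    lt_mul_share_of_lt_lowerThreshold hp1 hn ha hD hq hlam1'
  have hgap : C2 - C1 = p * ((α1a + α2) * q2 - α2) := by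
    rw [hC1, hC2]
    ring
  rw [hgap]
  exact mul_pos hp (sub_pos.2 hshare)

/-- In the first regime (`λ¹ < λ̲¹`) of the motivating example, the relative
value of information is strictly positive: the uninformed population's equilibrium cost
strictly exceeds the informed population's cost, `C²*(λ) − C¹*(λ) > 0`. -/
theorem relative_value_positive_first_regime
    (p α1a α1n α2 b lam1 : ℝ)
    (hp : 0 < p) (hp1 : p < 1) (hb : 0 < b)
    (h0 : 0 < α1n) (h1 : α1n < α2) (h2 : α2 < α1a)
    (lamL : ℝ) (hlamL : lamL = α2 * (1 / (α1n + α2) - 1 / (α1a + α2)))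
    (hlam1 : 0 ≤ lam1) (hlam1' : lam1 < lamL)
    (abar q2 C1 C2 : ℝ)
    (habar : abar = p * α1a + (1 - p) * α1n)
    (hq2 : q2 = α2 / (abar + α2) - lam1 * ((1 - p) * (α1n + α2)) / (abar + α2))
    (hC1 : C1 = p * (α2 * (1 - q2) + b) + (1 - p) * (α1n * (lam1 + q2) + b))
    (hC2 : C2 = p * (α1a * q2 + b) + (1 - p) * (α1n * (lam1 + q2) + b)) :
    0 < C2 - C1 :=
  relative_value_positive_first_regime_general p α1a α1n α2 b lam1 hp hp1 h0 h1 h2 lamL hlamL hlam1'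
    abar q2 C1 C2 habar hq2 hC1 hC2
end

section
/- Suppose J^j(f*) = 0 for every equilibrium route flow f* at every size vector λ (population j is uninformed), and suppose the relative value of information satisfies the regime trichotomy: V^{ij*}(λ) < 0 only in the regime Λ₃^{ij} where the information-impact constraint of population j is tight at equilibrium with λ^j > 0, i.e., Ĵ^j(f*) = λ^j D. Then the regime Λ₃^{ij} is empty and C^{j*}(λ) ≥ C^{i*}(λ) for every size vector λ with λ^i, λ^j > 0 and every other population i. -/
/-!
An uninformed population has `Ĵ^j(f*) = 0` at every equilibrium, so tightness of its
information-impact constraint, `Ĵ^j(f*) = λ^j D`, would force `λ^j D = 0`, which is impossible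
when `λ^j > 0`. Hence the regime `Λ₃^{ij}` is empty, and since `V^{ij*}` can only be negative
there, `V^{ij*} ≥ 0` everywhere on the simplex.
-/

theorem sep_tight_eq_empty_of_forall_eq_zero {X Flow : Type*} {D : ℝ} (hD : 0 < D)
    (S : Set X) (w : X → ℝ) (Feq : X → Set Flow) (hFeqNe : ∀ x ∈ S, (Feq x).Nonempty)
    (J : Flow → ℝ) (hJ : ∀ x ∈ S, ∀ f ∈ Feq x, J f = 0) :
    {x ∈ S | 0 < w x ∧ ∀ f ∈ Feq x, J f = w x * D} = ∅ := by
  refine Set.eq_empty_of_forall_notMem fun x ⟨hx, hw, htight⟩ => ?_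
  obtain ⟨f, hf⟩ := hFeqNe x hx
  have hzero : w x * D = 0 := (htight f hf).symm.trans (hJ x hx f hf)
  exact (mul_pos hw hD).ne' hzero

theorem uninformed_no_advantage_general
    {I Flow : Type*}
    (D : ℝ) (hD : 0 < D)
    (i j : I)
    (simplex : Set (I → ℝ))
    (Feq : (I → ℝ) → Set Flow)
    (hFeqNe : ∀ lam ∈ simplex, (Feq lam).Nonempty)
    (Jhat : I → Flow → ℝ)
    (huninformed : ∀ lam ∈ simplex, ∀ f ∈ Feq lam, Jhat j f = 0)
    (C : I → (I → ℝ) → ℝ)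
    (V : (I → ℝ) → ℝ) (hV : ∀ lam, V lam = C j lam - C i lam)
    (Λ₃ : Set (I → ℝ))
    (hΛ₃ : Λ₃ = {lam ∈ simplex |
      0 < lam j ∧ ∀ f ∈ Feq lam, Jhat j f = lam j * D})
    (htrichotomy : ∀ lam ∈ simplex, V lam < 0 → lam ∈ Λ₃) :
    Λ₃ = ∅ ∧
    ∀ lam ∈ simplex, 0 < lam i → 0 < lam j → C i lam ≤ C j lam := by
  have hempty : Λ₃ = ∅ := hΛ₃ ▸
    sep_tight_eq_empty_of_forall_eq_zero hD simplex (· j) Feq hFeqNe (Jhat j) huninformed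
  refine ⟨hempty, fun lam hlam _ _ => ?_⟩
  by_contra! hlt
  have hmem : lam ∈ Λ₃ := htrichotomy lam hlam (by rw [hV]; linarith)
  simp [hempty] at hmem

/-- Proposition 4: If population `j` is uninformed — every equilibrium route
flow `f*` at every size vector has `Ĵ^j(f*) = 0` — and the relative value of information
`V^{ij*}(λ) = C^j(λ) − C^i(λ)` can be negative only in the regime `Λ₃^{ij}` where `λ^j > 0`
and population `j`'s information-impact constraint is tight at equilibrium
(`Ĵ^j(f*) = λ^j D`), then the regime `Λ₃^{ij}` is empty and `C^{j*}(λ) ≥ C^{i*}(λ)` for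
every size vector with `λ^i, λ^j > 0`. -/
theorem uninformed_no_advantage
    {I Flow : Type*} [Fintype I]
    (D : ℝ) (hD : 0 < D)
    (i j : I) (hij : i ≠ j)
    (simplex : Set (I → ℝ))
    (hsimplex : simplex = {lam | (∀ k, 0 ≤ lam k) ∧ ∑ k : I, lam k = 1})
    (Feq : (I → ℝ) → Set Flow)
    (hFeqNe : ∀ lam ∈ simplex, (Feq lam).Nonempty)
    (Jhat : I → Flow → ℝ)
    (huninformed : ∀ lam ∈ simplex, ∀ f ∈ Feq lam, Jhat j f = 0)
    (C : I → (I → ℝ) → ℝ)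
    (V : (I → ℝ) → ℝ) (hV : ∀ lam, V lam = C j lam - C i lam)
    (Λ₃ : Set (I → ℝ))
    (hΛ₃ : Λ₃ = {lam ∈ simplex |
      0 < lam j ∧ ∀ f ∈ Feq lam, Jhat j f = lam j * D})
    (htrichotomy : ∀ lam ∈ simplex, V lam < 0 → lam ∈ Λ₃) :
    Λ₃ = ∅ ∧
    ∀ lam ∈ simplex, 0 < lam i → 0 < lam j → C i lam ≤ C j lam :=
  uninformed_no_advantage_general D hD i j simplex Feq hFeqNe Jhat huninformed C V hV Λ₃ hΛ₃
    htrichotomy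
end

section
/- In a Bayesian routing game on a network of parallel routes (every route consists of a single distinct edge, so route flows equal edge loads) with two populations, if the information-impact constraint of population 1 is tight at the unique equilibrium route flow f* (regime Λ₁^{12}), then the equilibrium strategy profile is unique and given by q_r^{1*}(t¹) = f*_r(t¹, t̂²) − min_{t̃¹} f*_r(t̃¹, t̂²) and q_r^{2*}(t²) = min_{t̃¹} f*_r(t̃¹, t²), for any fixed t̂² ∈ T². -/
/-!
Writing `f*_r(t¹,t²) = q¹_r(t¹) + q²_r(t²)`, the minimum over `t¹` of `f*_r(t¹,t²)` is
`μ_r + q²_r(t²)` with `μ_r = min_{t¹} q¹_r(t¹) ≥ 0`. Summing over routes at `t̂²`, tightness of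
population 1's constraint gives `∑_r μ_r = 0`, so every `μ_r` vanishes, and both formulas follow
by substituting `μ_r = 0` into the decomposition.
-/

open Finset

theorem Finset.inf'_add_const {ι α : Type*} [AddCommGroup α] [LinearOrder α]
    [IsOrderedAddMonoid α] {s : Finset ι} (hs : s.Nonempty) (g : ι → α) (c : α) :
    s.inf' hs (fun i => g i + c) = s.inf' hs g + c :=
  (apply_inf'_eq_inf'_comp hs (· + c) fun x y => (min_add_add_right x y c).symm).symm

theorem unique_strategy_regime_one_general
    {T1 T2 R : Type*} [Fintype T1] [Nonempty T1] [Fintype R]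
    (D lam1 lam2 : ℝ)
    (hlam : lam1 + lam2 = 1)
    (f : R → T1 → T2 → ℝ)
    (tref2 : T2)
    (htight : lam1 * D =
      D - ∑ r : R, Finset.univ.inf' Finset.univ_nonempty (fun t1 : T1 => f r t1 tref2))
    (q1 : T1 → R → ℝ) (q2 : T2 → R → ℝ)
    (hq1pos : ∀ t1 r, 0 ≤ q1 t1 r)
    (hq2sum : ∀ t2, ∑ r : R, q2 t2 r = lam2 * D)
    (hdecomp : ∀ r t1 t2, f r t1 t2 = q1 t1 r + q2 t2 r) :
    (∀ (r : R) (t1 : T1),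
      q1 t1 r = f r t1 tref2 -
        Finset.univ.inf' Finset.univ_nonempty (fun s1 : T1 => f r s1 tref2)) ∧
    (∀ (r : R) (t2 : T2),
      q2 t2 r = Finset.univ.inf' Finset.univ_nonempty (fun s1 : T1 => f r s1 t2)) := by
  set μ : R → ℝ := fun r => univ.inf' univ_nonempty (fun s1 : T1 => q1 s1 r)
  have hmin : ∀ r t2, univ.inf' univ_nonempty (fun s1 : T1 => f r s1 t2) = μ r + q2 t2 r :=
    fun r t2 => by simp_rw [hdecomp]; exact inf'_add_const _ _ _
  have hμ_nonneg : ∀ r, 0 ≤ μ r := fun r => le_inf' _ _ fun s1 _ => hq1pos s1 r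
  have hμ_sum : ∑ r, μ r = 0 := by
    simp_rw [hmin, sum_add_distrib] at htight
    linear_combination htight - hq2sum tref2 - D * hlam
  have hμ_zero : ∀ r, μ r = 0 := fun r =>
    (sum_eq_zero_iff_of_nonneg fun r _ => hμ_nonneg r).mp hμ_sum r (mem_univ r)
  refine ⟨fun r t1 => ?_, fun r t2 => ?_⟩ <;> rw [hmin, hμ_zero]
  · rw [hdecomp]; ring
  · ring

/-- Corollary B.1, regime Λ₁ case: In a two-population parallel-route game
(route flows = edge loads, so the equilibrium route flow `f*` is unique), if the
information-impact constraint of population 1 is tight at `f*`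
(`λ¹ D = Ĵ¹(f*) = D − ∑_r min_{t¹} f*_r(t¹, t̂²)`), then the equilibrium strategy profile
is unique: every feasible decomposition `f*_r(t¹,t²) = q¹_r(t¹) + q²_r(t²)` satisfies
`q¹_r(t¹) = f*_r(t¹,t̂²) − min_{t̃¹} f*_r(t̃¹,t̂²)` and `q²_r(t²) = min_{t̃¹} f*_r(t̃¹,t²)`. -/
theorem unique_strategy_regime_one
    {T1 T2 R : Type*} [Fintype T1] [Nonempty T1] [Fintype T2] [Nonempty T2] [Fintype R]
    (D lam1 lam2 : ℝ) (hD : 0 < D) (hlam1 : 0 ≤ lam1) (hlam2 : 0 ≤ lam2)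
    (hlam : lam1 + lam2 = 1)
    (f : R → T1 → T2 → ℝ)
    (hsep : ∀ (r : R) (t1 s1 : T1) (t2 s2 : T2),
      f r t1 t2 - f r s1 t2 = f r t1 s2 - f r s1 s2)
    (hdem : ∀ (t1 : T1) (t2 : T2), ∑ r : R, f r t1 t2 = D)
    (hpos : ∀ (r : R) (t1 : T1) (t2 : T2), 0 ≤ f r t1 t2)
    (tref2 : T2)
    (htight : lam1 * D =
      D - ∑ r : R, Finset.univ.inf' Finset.univ_nonempty (fun t1 : T1 => f r t1 tref2))
    (q1 : T1 → R → ℝ) (q2 : T2 → R → ℝ)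
    (hq1pos : ∀ t1 r, 0 ≤ q1 t1 r) (hq2pos : ∀ t2 r, 0 ≤ q2 t2 r)
    (hq1sum : ∀ t1, ∑ r : R, q1 t1 r = lam1 * D)
    (hq2sum : ∀ t2, ∑ r : R, q2 t2 r = lam2 * D)
    (hdecomp : ∀ r t1 t2, f r t1 t2 = q1 t1 r + q2 t2 r) :
    (∀ (r : R) (t1 : T1),
      q1 t1 r = f r t1 tref2 -
        Finset.univ.inf' Finset.univ_nonempty (fun s1 : T1 => f r s1 tref2)) ∧
    (∀ (r : R) (t2 : T2),
      q2 t2 r = Finset.univ.inf' Finset.univ_nonempty (fun s1 : T1 => f r s1 t2)) :=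
  unique_strategy_regime_one_general D lam1 lam2 hlam f tref2 htight q1 q2 hq1pos hq2sum hdecomp
end
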